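/- Let κ ≥ 5 and let p/q be an irreducible fraction with 0 < p/q < 1 whose Farey path w = s_1 s_2 … s_n has length n ≥ κ − 2. Then m(κ, p/q) = 0 if and only if s_{κ−3} = s_{κ−2}, i.e. the degree κ is absent from the reduced degree sequence of G_{p/q} exactly when the path has a symbol repetition (LL or RR) at position κ − 2. -/

import Mathlib

/-- Symbols for paths in the Farey binary tree. -/
inductive LR
  | L
  | R
deriving DecidableEq

/-- One step in the Farey binary tree: update the current pair of fractions
(represented as pairs (numerator, denominator) of naturals). -/
def fareyStep : ((ℕ × ℕ) × (ℕ × ℕ)) → LR → ((ℕ × ℕ) × (ℕ × ℕ))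
  | ((a, b), (c, d)), LR.L => ((a, b), (a + c, b + d))
  | ((a, b), (c, d)), LR.R => ((a + c, b + d), (c, d))

/-- The final pair of fractions of a word: after reading the first symbol `L`
the current pair is (0/1, 1/1); the remaining symbols update it. -/
def finalPair (w : List LR) : (ℕ × ℕ) × (ℕ × ℕ) :=
  w.tail.foldl fareyStep ((0, 1), (1, 1))

/-- The value ⟨w⟩ of a word: the mediant of its final pair, as (numerator, denominator). -/
def value (w : List LR) : ℕ × ℕ :=
  ((finalPair w).1.1 + (finalPair w).2.1, (finalPair w).1.2 + (finalPair w).2.2)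

/-- A word over {L,R} is a Farey word when its first symbol is `L`. -/
def IsFareyWord (w : List LR) : Prop := w.head? = some LR.L

/-- Concatenation of degree sequences:
[a₁,…,a_s] ⊕ [b₁,…,b_t] = [a₁+1, a₂, …, a_{s−1}, a_s+b₁, b₂, …, b_{t−1}, b_t+1]. -/
def oplus (A B : List ℕ) : List ℕ :=
  (A.dropLast.modifyHead (· + 1)) ++ [A.getLastD 0 + B.headD 0] ++ B.tail.dropLast
    ++ [B.getLastD 0 + 1]

/-- Update of the pair (D(left ancestor), D(right ancestor)) of unreduced degree
sequences along one symbol. -/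
def degStep : (List ℕ × List ℕ) → LR → (List ℕ × List ℕ)
  | (A, B), LR.L => (A, oplus A B)
  | (A, B), LR.R => (oplus A B, B)

/-- The pair (D(a/b), D(c/d)) of unreduced degree sequences of the final pair of a word;
0/1 and 1/1 are both assigned the list [1,1]. -/
def degPair (w : List LR) : List ℕ × List ℕ :=
  w.tail.foldl degStep ([1, 1], [1, 1])

/-- The unreduced degree sequence D(⟨w⟩) = D(a/b) ⊕ D(c/d) of the value of a word. -/
def Dseq (w : List LR) : List ℕ :=
  oplus (degPair w).1 (degPair w).2

/-- Reduction: [k₁,…,k_{q+1}] becomes [k₂,…,k_q, k₁+k_{q+1}]; the last entry is the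
boundary degree and the remaining ones are the inner degrees. -/
def reduce (D : List ℕ) : List ℕ :=
  D.tail.dropLast ++ [D.headD 0 + D.getLastD 0]

/-- The reduced degree sequence of the Haros graph G_{⟨w⟩}. -/
def degSeq (w : List LR) : List ℕ := reduce (Dseq w)

/-- Degree-distribution entropy S of the Haros graph G_{⟨w⟩}:
S = −Σ_k P(k)·ln P(k), summed over the degree values occurring in the reduced
degree sequence, where P(k) = m(k)/q. -/
noncomputable def Sent (w : List LR) : ℝ :=
  -∑ k ∈ (degSeq w).toFinset,
    (((degSeq w).count k : ℝ) / ((value w).2 : ℝ)) *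
      Real.log (((degSeq w).count k : ℝ) / ((value w).2 : ℝ))

/-- Reduced entropy H of the Haros graph G_{⟨w⟩} (with the convention 0·ln 0 = 0,
automatic since Real.log 0 = 0). -/
noncomputable def Hent (w : List LR) : ℝ :=
  let x : ℝ := ((value w).1 : ℝ) / ((value w).2 : ℝ)
  if x ≤ 1 / 2 then
    Sent w + 2 * x * Real.log x + (1 - 2 * x) * Real.log (1 - 2 * x)
  else
    Sent w + 2 * (1 - x) * Real.log (1 - x) + (2 * x - 1) * Real.log (2 * x - 1)


/-!
Carry the pair (A, B) = (D(a/b), D(c/d)) along the path. Each symbol keeps one of the two and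
replaces the other by A ⊕ B, whose inner entries are those of A, those of B and one new
*junction* entry `last A + first B`; so the inner degrees of G_{p/q} are exactly the junctions
met along the path, and the boundary degree is n + 3. Tracking the end entries of A and B shows
that a repetition s_i = s_{i+1} repeats the previous junction, while a switch s_i ≠ s_{i+1}
creates the junction i + 3. Since every junction created before the first switch is 2 or 3,
a degree κ ≥ 5 occurs iff s_{κ-3} ≠ s_{κ-2}.
-/

/-- A pair (A, B) of unreduced degree sequences, with each list split into its first entry,
its interior and its last entry. -/
structure DegState where
  a0 : ℕ
  aI : List ℕ
  aN : ℕ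
  b0 : ℕ
  bI : List ℕ
  bN : ℕ

namespace DegState

def left (s : DegState) : List ℕ := (s.a0 :: s.aI) ++ [s.aN]

def right (s : DegState) : List ℕ := (s.b0 :: s.bI) ++ [s.bN]

def junction (s : DegState) : ℕ := s.aN + s.b0

def inner (s : DegState) : List ℕ := s.aI ++ s.junction :: s.bI

def step : DegState → LR → DegState
  | s, LR.L => ⟨s.a0, s.aI, s.aN, s.a0 + 1, s.inner, s.bN + 1⟩
  | s, LR.R => ⟨s.a0 + 1, s.inner, s.bN + 1, s.b0, s.bI, s.bN⟩

def init : DegState := ⟨1, [], 1, 1, [], 1⟩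

theorem oplus_left_right (s : DegState) :
    oplus s.left s.right = (s.a0 + 1) :: (s.inner ++ [s.bN + 1]) := by
  simp only [oplus, left, right, List.dropLast_concat, List.getLastD_concat, List.modifyHead_cons]
  simp [inner, junction]

theorem degStep_left_right (s : DegState) (x : LR) :
    degStep (s.left, s.right) x = ((s.step x).left, (s.step x).right) := by
  cases x <;> simp only [degStep, oplus_left_right] <;> simp [step, left, right]

theorem foldl_degStep_left_right (t : List LR) (s : DegState) :
    t.foldl degStep (s.left, s.right) = ((t.foldl step s).left, (t.foldl step s).right) := by
  induction t generalizing s with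
  | nil => rfl
  | cons x t ih => simp only [List.foldl_cons, degStep_left_right, ih]

theorem a0_add_bN_foldl (t : List LR) (s : DegState) :
    (t.foldl step s).a0 + (t.foldl step s).bN = s.a0 + s.bN + t.length := by
  induction t generalizing s with
  | nil => rfl
  | cons x t ih => cases x <;> simp only [List.foldl_cons, ih, step, List.length_cons] <;> omega

theorem degSeq_cons_L (t : List LR) :
    degSeq (LR.L :: t) = (t.foldl step init).inner ++ [t.length + 4] := by
  set s := t.foldl step init with hs
  have hboundary : s.a0 + s.bN = t.length + 2 := by
    rw [hs, a0_add_bN_foldl]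
    simp only [init]
    omega
  have hD : Dseq (LR.L :: t) = (s.a0 + 1) :: (s.inner ++ [s.bN + 1]) := by
    rw [Dseq, degPair, List.tail_cons, show (([1, 1], [1, 1]) : List ℕ × List ℕ) =
      (init.left, init.right) from rfl, foldl_degStep_left_right, oplus_left_right]
  rw [degSeq, reduce, hD, List.tail_cons, List.dropLast_concat, List.headD_cons,
    ← List.cons_append, List.getLastD_concat]
  congr 2
  omega

theorem mem_inner_step {κ : ℕ} (s : DegState) (x : LR) :
    κ ∈ (s.step x).inner ↔ κ ∈ s.inner ∨ κ = (s.step x).junction := by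
  cases x <;> simp only [step, inner, List.mem_append, List.mem_cons] <;> tauto

theorem junction_mem_inner (s : DegState) : s.junction ∈ s.inner := by
  simp [inner]

theorem junction_step_init (x : LR) : (init.step x).junction = 3 := by
  cases x <;> rfl

theorem junction_step_step_self (s : DegState) (x : LR) :
    ((s.step x).step x).junction = (s.step x).junction := by
  cases x <;> rfl

theorem junction_step_step_of_ne (s : DegState) {x y : LR} (h : x ≠ y) :
    ((s.step x).step y).junction = s.a0 + s.bN + 3 := by
  cases x <;> cases y <;> simp only [step, junction] <;> first | omega | exact absurd rfl h

end DegState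

/-- Here `t` is the path with its leading `L` removed, so `t[j]` is the symbol s_{j+2}. -/
def IsSwitchDegree (t : List LR) (κ : ℕ) : Prop :=
  ∃ j, j + 1 < t.length ∧ t[j]? ≠ t[j + 1]? ∧ κ = j + 5

theorem not_isSwitchDegree_of_length_le_one {t : List LR} {κ : ℕ} (ht : t.length ≤ 1) :
    ¬IsSwitchDegree t κ := fun ⟨_, hj, _⟩ => by omega

theorem isSwitchDegree_append_pair (t : List LR) (y x : LR) (κ : ℕ) :
    IsSwitchDegree (t ++ [y] ++ [x]) κ ↔
      IsSwitchDegree (t ++ [y]) κ ∨ y ≠ x ∧ κ = t.length + 5 := by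
  have hprefix : ∀ j < t.length + 1, (t ++ [y] ++ [x])[j]? = (t ++ [y])[j]? := fun j hj =>
    List.getElem?_append_left (by simpa using hj)
  constructor
  · rintro ⟨j, hj, hne, rfl⟩
    simp only [List.length_append, List.length_singleton] at hj
    rcases (by omega : j + 1 < t.length + 1 ∨ j = t.length) with hj | rfl
    · refine Or.inl ⟨j, by simpa using hj, ?_, rfl⟩
      rwa [hprefix j (by omega), hprefix (j + 1) hj] at hne
    · exact Or.inr ⟨by simpa using hne, rfl⟩
  · rintro (⟨j, hj, hne, rfl⟩ | ⟨hne, rfl⟩)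
    · simp only [List.length_append, List.length_singleton] at hj
      refine ⟨j, by simp only [List.length_append, List.length_singleton]; omega, ?_, rfl⟩
      rwa [hprefix j (by omega), hprefix (j + 1) hj]
    · exact ⟨t.length, by simp, by simpa using hne, rfl⟩

theorem isSwitchDegree_iff {t : List LR} {κ : ℕ} (hκ : 5 ≤ κ) (hlen : κ ≤ t.length + 3) :
    IsSwitchDegree t κ ↔ t[κ - 5]? ≠ t[κ - 4]? := by
  constructor
  · rintro ⟨j, -, hne, rfl⟩
    simpa using hne
  · intro hne
    exact ⟨κ - 5, by omega, by rwa [show κ - 5 + 1 = κ - 4 by omega], by omega⟩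

namespace DegState

theorem mem_inner_foldl_iff (t : List LR) {κ : ℕ} (hκ : 5 ≤ κ) :
    κ ∈ (t.foldl step init).inner ↔ IsSwitchDegree t κ := by
  induction t using List.reverseRecOn with
  | nil =>
    simp only [List.foldl_nil, init, inner, junction, List.nil_append, List.mem_singleton,
      not_isSwitchDegree_of_length_le_one (t := []) zero_le_one, iff_false]
    omega
  | append_singleton t x ih =>
    rw [List.foldl_append, List.foldl_cons, List.foldl_nil, mem_inner_step, ih]
    rcases t.eq_nil_or_concat' with rfl | ⟨t, y, rfl⟩
    · simp only [List.foldl_nil, junction_step_init, List.nil_append,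
        not_isSwitchDegree_of_length_le_one (t := []) zero_le_one,
        not_isSwitchDegree_of_length_le_one (t := [x]) le_rfl, false_or, iff_false]
      omega
    simp only [List.foldl_append, List.foldl_cons, List.foldl_nil] at ih ⊢
    rw [isSwitchDegree_append_pair]
    by_cases hyx : y = x
    · subst hyx
      rw [junction_step_step_self]
      simp only [ne_eq, not_true_eq_false, false_and, or_false]
      exact or_iff_left_of_imp fun h => ih.mp (h ▸ junction_mem_inner _)
    · rw [junction_step_step_of_ne _ hyx, a0_add_bN_foldl,
        show init.a0 + init.bN + t.length + 3 = t.length + 5 by simp only [init]; omega]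
      simp only [hyx, ne_eq, not_false_eq_true, true_and]

end DegState

theorem statement3_general (κ : ℕ) (hκ : 5 ≤ κ) (w : List LR) (hw : IsFareyWord w)
    (hn : κ - 2 ≤ w.length) :
    (degSeq w).count κ = 0 ↔ w[κ - 4]? = w[κ - 3]? := by
  obtain ⟨t, rfl⟩ := List.head?_eq_some_iff.mp hw
  simp only [List.length_cons] at hn
  have hboundary : κ ≠ t.length + 4 := by omega
  rw [List.count_eq_zero, DegState.degSeq_cons_L, List.mem_append, List.mem_singleton,
    DegState.mem_inner_foldl_iff t hκ, isSwitchDegree_iff hκ (by omega),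
    show κ - 3 = κ - 4 + 1 by omega, List.getElem?_cons_succ,
    show κ - 4 = κ - 5 + 1 by omega, List.getElem?_cons_succ]
  simp only [hboundary, or_false, not_not]

/-- for κ ≥ 5 and a Farey path w = s₁s₂…s_n of length n ≥ κ − 2 with value
the irreducible fraction p/q ∈ (0,1), the degree κ is absent from the reduced degree
sequence of G_{p/q} exactly when s_{κ−3} = s_{κ−2} (a symbol repetition LL or RR at
position κ − 2). Indices are 1-based in the informal statement, 0-based via `getElem?`. -/
theorem statement3 (κ : ℕ) (hκ : 5 ≤ κ) (p q : ℕ) (hcop : Nat.Coprime p q)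
    (hp : 0 < p) (hpq : p < q) (w : List LR) (hw : IsFareyWord w)
    (hn : κ - 2 ≤ w.length) (hval : value w = (p, q)) :
    (degSeq w).count κ = 0 ↔ w[κ - 4]? = w[κ - 3]? :=
  statement3_general κ hκ w hw hn
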